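/- If the set function f : 2^V → ℝ≥0 is monotone and M_f = max over all S ⊆ V and e ∈ V \ S of f(e|S), then every second-order partial derivative of the Multinoulli Extension is bounded by B̄²·M_f: for all (p_1,…,p_K) ∈ ∏_{k=1}^K Δ_{n_k}, all k_1, k_2 ∈ {1,…,K}, all m_1 ∈ {1,…,n_{k_1}} and m_2 ∈ {1,…,n_{k_2}}, one has |∂²F/∂p_{k_1}^{m_1}∂p_{k_2}^{m_2} (p_1,…,p_K)| ≤ B̄²·M_f, where B̄ = max_{k ∈ {1,…,K}} B_k. -/

import Mathlib

open Finset

noncomputable section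

namespace Multinoulli

variable {K : ℕ}

/-- An element of the ground set `V`: a community index `k` together with the
index `m` of the element `v_k^m` inside its community `V_k`. -/
abbrev Elem (n : Fin K → ℕ) := Σ k : Fin K, Fin (n k)

/-- A sampling slot: a community `k` together with a trial index `b ∈ {1,…,B_k}`. -/
abbrev Slot (B : Fin K → ℕ) := Σ k : Fin K, Fin (B k)

/-- A joint outcome of all the independent multinoulli trials; `none` encodes a
draw of `∅`, which contributes no element. -/
abbrev Choice (n B : Fin K → ℕ) := ∀ s : Slot B, Option (Fin (n s.1))

/-- The probability that `Multi(p_k)` (the `k`-th block of `x`) assigns to a given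
outcome: `x ⟨k,m⟩` for the element `v_k^m` and `1 - Σ_m x ⟨k,m⟩` for `∅`. -/
def prob (n : Fin K → ℕ) (x : Elem n → ℝ) (k : Fin K) : Option (Fin (n k)) → ℝ
  | some m => x ⟨k, m⟩
  | none => 1 - ∑ m : Fin (n k), x ⟨k, m⟩

/-- The probability of the joint outcome `e` (all trials are mutually independent). -/
def jointProb (n B : Fin K → ℕ) (x : Elem n → ℝ) (e : Choice n B) : ℝ :=
  ∏ s : Slot B, prob n x s.1 (e s)

/-- The subset of the ground set selected by the trials whose slot lies in `A`
(a draw of `∅` contributes no element to the union). -/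
def chosen (n B : Fin K → ℕ) (e : Choice n B) (A : Finset (Slot B)) : Finset (Elem n) :=
  A.biUnion fun s => ((e s).map fun m => (⟨s.1, m⟩ : Elem n)).toFinset

/-- The Multinoulli Extension `F` of the set function `f`:
`F(x) = E[f(∪_{k,b} {e_k^b})]` for mutually independent `e_k^b ∼ Multi(p_k)`. -/
def ME (n B : Fin K → ℕ) (f : Finset (Elem n) → ℝ) (x : Elem n → ℝ) : ℝ :=
  ∑ e : Choice n B, f (chosen n B e Finset.univ) * jointProb n B x e

/-- The first-order partial derivative `∂G/∂x_i` at `x`. -/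
def pderiv (n : Fin K → ℕ) (G : (Elem n → ℝ) → ℝ) (i : Elem n) (x : Elem n → ℝ) : ℝ :=
  deriv (fun t => G (Function.update x i t)) (x i)

/-- The gradient `∇G(x)`. -/
def grad (n : Fin K → ℕ) (G : (Elem n → ℝ) → ℝ) (x : Elem n → ℝ) : Elem n → ℝ :=
  fun i => pderiv n G i x

/-- The second-order partial derivative `∂²G/∂x_i∂x_j` at `x`. -/
def pderiv2 (n : Fin K → ℕ) (G : (Elem n → ℝ) → ℝ) (i j : Elem n) (x : Elem n → ℝ) : ℝ :=
  pderiv n (fun y => pderiv n G j y) i x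

/-- The Euclidean inner product on `∏_k ℝ^{n_k}`. -/
def inner' (n : Fin K → ℕ) (u v : Elem n → ℝ) : ℝ := ∑ i : Elem n, u i * v i

/-- Membership in the product of simplices `∏_{k=1}^K Δ_{n_k}`. -/
def InSimplex (n : Fin K → ℕ) (x : Elem n → ℝ) : Prop :=
  (∀ i, 0 ≤ x i) ∧ ∀ k : Fin K, ∑ m : Fin (n k), x ⟨k, m⟩ ≤ 1

/-- Feasibility for the partition constraint: `|S ∩ V_k| ≤ B_k` for all `k`. -/
def Feasible (n B : Fin K → ℕ) (S : Finset (Elem n)) : Prop :=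
  ∀ k : Fin K, (S.filter fun i => i.1 = k).card ≤ B k

/-- Monotonicity of a set function. -/
def MonotoneSet (n : Fin K → ℕ) (f : Finset (Elem n) → ℝ) : Prop :=
  ∀ A B : Finset (Elem n), A ⊆ B → f A ≤ f B

/-- The marginal contribution `f(v|A) = f(A ∪ {v}) - f(A)`. -/
def marg (n : Fin K → ℕ) (f : Finset (Elem n) → ℝ) (v : Elem n) (A : Finset (Elem n)) : ℝ :=
  f (insert v A) - f A

/-- `α`-weak DR-submodularity: `f(v|A) ≥ α·f(v|B)` for all `A ⊆ B` and `v ∉ B`. -/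
def WeaklyDR (n : Fin K → ℕ) (f : Finset (Elem n) → ℝ) (α : ℝ) : Prop :=
  ∀ A B : Finset (Elem n), A ⊆ B → ∀ v, v ∉ B → α * marg n f v B ≤ marg n f v A

/-- `γ`-weak submodularity from below. -/
def WeaklyBelow (n : Fin K → ℕ) (f : Finset (Elem n) → ℝ) (γ : ℝ) : Prop :=
  ∀ A B : Finset (Elem n), A ⊆ B → γ * (f B - f A) ≤ ∑ v ∈ B \ A, marg n f v A

/-- `β`-weak submodularity from above. -/
def WeaklyAbove (n : Fin K → ℕ) (f : Finset (Elem n) → ℝ) (β : ℝ) : Prop :=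
  ∀ A B : Finset (Elem n), A ⊆ B → ∑ v ∈ B \ A, marg n f v (B.erase v) ≤ β * (f B - f A)

/-- The scaled indicator vector `Σ_{k=1}^K (1/B_k)·1_{S∩V_k}`. -/
def indVec (n B : Fin K → ℕ) (S : Finset (Elem n)) : Elem n → ℝ :=
  fun i => if i ∈ S then ((B i.1 : ℝ))⁻¹ else 0

/-! Each slot of the Multinoulli Extension draws from a law that is affine in `x`, so
differentiating in `x_i` replaces, at one slot `s` of the community of `i` at a time, the law of
`s` by the signed measure `δ_i - δ_∅`. Differentiating twice therefore yields, for every pair of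
slots, the expectation of a difference of two marginal gains of `f`; by monotonicity both lie in
`[0, M_f]`, so each pair contributes at most `M_f`, and only the `B_{k₁} B_{k₂} ≤ B̄²` pairs of
slots in the right communities contribute at all. -/

theorem _root_.Fintype.sum_sum_update_swap {ι M : Type*} [Fintype ι] [DecidableEq ι]
    {β : ι → Type*} [∀ i, Fintype (β i)] [AddCommMonoid M] (i : ι)
    (Φ : (∀ j, β j) → β i → M) :
    ∑ e, ∑ a, Φ (Function.update e i a) (e i) = ∑ e, ∑ a, Φ e a := by
  simp only [← Fintype.sum_prod_type']
  refine Fintype.sum_equiv (Function.Involutive.toPerm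
    (fun p : (∀ j, β j) × β i => (Function.update p.1 i p.2, p.1 i)) ?_) _ _ fun _ => rfl
  rintro ⟨e, a⟩
  simp

def probDeriv (n : Fin K → ℕ) (i : Elem n) (k : Fin K) : Option (Fin (n k)) → ℝ
  | some m => if (⟨k, m⟩ : Elem n) = i then 1 else 0
  | none => -∑ m : Fin (n k), if (⟨k, m⟩ : Elem n) = i then 1 else 0

def expect (n B : Fin K → ℕ) (x : Elem n → ℝ) (G : Choice n B → ℝ) : ℝ :=
  ∑ e, G e * jointProb n B x e

def slotDiff (n B : Fin K → ℕ) (s : Slot B) (i : Elem n) (G : Choice n B → ℝ)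
    (e : Choice n B) : ℝ :=
  ∑ o, probDeriv n i s.1 o * G (Function.update e s o)

section

variable (n B : Fin K → ℕ)

theorem hasDerivAt_prob_update (x : Elem n → ℝ) (i : Elem n) (k : Fin K)
    (o : Option (Fin (n k))) :
    HasDerivAt (fun t => prob n (Function.update x i t) k o) (probDeriv n i k o) (x i) := by
  have hsome : ∀ m : Fin (n k), HasDerivAt (fun t => Function.update x i t ⟨k, m⟩)
      (if (⟨k, m⟩ : Elem n) = i then 1 else 0) (x i) := by
    intro m
    split_ifs with h
    · subst h
      simpa using hasDerivAt_id' (x ⟨k, m⟩)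
    · simpa [Function.update_of_ne h] using hasDerivAt_const (x i) (x ⟨k, m⟩)
  cases o with
  | some m => exact hsome m
  | none => simpa [prob, probDeriv] using (HasDerivAt.fun_sum fun m _ => hsome m).const_sub 1

theorem hasDerivAt_jointProb_update (x : Elem n → ℝ) (i : Elem n) (e : Choice n B) :
    HasDerivAt (fun t => jointProb n B (Function.update x i t) e)
      (∑ s, probDeriv n i s.1 (e s) * ∏ s' ∈ univ.erase s, prob n x s'.1 (e s')) (x i) := by
  simpa [jointProb, mul_comm] using
    HasDerivAt.fun_finsetProd (u := univ) fun s _ => hasDerivAt_prob_update n x i s.1 (e s)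

theorem sum_prob (x : Elem n → ℝ) (k : Fin K) : ∑ o, prob n x k o = 1 := by
  simp [Fintype.sum_option, prob]

theorem sum_jointProb (x : Elem n → ℝ) : ∑ e, jointProb n B x e = 1 := by
  simp only [jointProb, ← Fintype.prod_sum, sum_prob, prod_const_one]

theorem prob_nonneg {x : Elem n → ℝ} (hx : InSimplex n x) (k : Fin K) (o : Option (Fin (n k))) :
    0 ≤ prob n x k o := by
  cases o with
  | some m => exact hx.1 _
  | none => exact sub_nonneg.2 (hx.2 k)

theorem jointProb_nonneg {x : Elem n → ℝ} (hx : InSimplex n x) (e : Choice n B) :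
    0 ≤ jointProb n B x e :=
  prod_nonneg fun s _ => prob_nonneg n hx s.1 (e s)

theorem abs_expect_le {x : Elem n → ℝ} (hx : InSimplex n x) {G : Choice n B → ℝ} {M : ℝ}
    (hG : ∀ e, |G e| ≤ M) : |expect n B x G| ≤ M :=
  calc |expect n B x G| ≤ ∑ e, |G e| * jointProb n B x e := by
        refine (abs_sum_le_sum_abs _ _).trans_eq (sum_congr rfl fun e _ => ?_)
        rw [abs_mul, abs_of_nonneg (jointProb_nonneg n B hx e)]
    _ ≤ ∑ e, M * jointProb n B x e :=
        sum_le_sum fun e _ => mul_le_mul_of_nonneg_right (hG e) (jointProb_nonneg n B hx e)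
    _ = M := by rw [← mul_sum, sum_jointProb, mul_one]

/-- The two sides are exchanged by the involution `(e, o) ↦ (e[s ↦ o], e s)`. -/
theorem expect_slotDiff (x : Elem n → ℝ) (s : Slot B) (i : Elem n) (G : Choice n B → ℝ) :
    expect n B x (slotDiff n B s i G) =
      ∑ e, G e * (probDeriv n i s.1 (e s) * ∏ s' ∈ univ.erase s, prob n x s'.1 (e s')) := by
  set w : Choice n B → ℝ := fun e => ∏ s' ∈ univ.erase s, prob n x s'.1 (e s')
  have hw : ∀ e o, w (Function.update e s o) = w e := fun e o =>
    prod_congr rfl fun s' hs' => by rw [Function.update_of_ne (ne_of_mem_erase hs')]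
  set Φ : Choice n B → Option (Fin (n s.1)) → ℝ :=
    fun e a => G e * (probDeriv n i s.1 (e s) * w e) * prob n x s.1 a
  calc expect n B x (slotDiff n B s i G)
      = ∑ e, ∑ o, Φ (Function.update e s o) (e s) := by
        unfold expect
        refine sum_congr rfl fun e _ => ?_
        rw [slotDiff, sum_mul, jointProb, ← mul_prod_erase univ _ (mem_univ s)]
        refine sum_congr rfl fun o _ => ?_
        simp only [Φ, Function.update_self, hw]
        ring
    _ = ∑ e, ∑ o, Φ e o := Fintype.sum_sum_update_swap s Φ
    _ = _ := by simp only [Φ, ← mul_sum, sum_prob, mul_one, w]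

theorem hasDerivAt_expect_update (x : Elem n → ℝ) (i : Elem n) (G : Choice n B → ℝ) :
    HasDerivAt (fun t => expect n B (Function.update x i t) G)
      (∑ s, expect n B x (slotDiff n B s i G)) (x i) := by
  simp only [expect_slotDiff]
  rw [sum_comm]
  simp only [← mul_sum]
  exact HasDerivAt.fun_sum fun e _ => (hasDerivAt_jointProb_update n B x i e).const_mul (G e)

theorem pderiv2_expect (G : Choice n B → ℝ) (i j : Elem n) (x : Elem n → ℝ) :
    pderiv2 n (fun y => expect n B y G) i j x =
      ∑ s₁, ∑ s₂, expect n B x (slotDiff n B s₂ i (slotDiff n B s₁ j G)) := by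
  have hj : (fun y => pderiv n (fun y => expect n B y G) j y) =
      fun y => ∑ s₁, expect n B y (slotDiff n B s₁ j G) :=
    funext fun y => (hasDerivAt_expect_update n B y j G).deriv
  rw [pderiv2, hj, pderiv]
  exact (HasDerivAt.fun_sum fun s₁ _ => hasDerivAt_expect_update n B x i _).deriv

theorem probDeriv_of_ne {i : Elem n} {k : Fin K} (h : k ≠ i.1) (o : Option (Fin (n k))) :
    probDeriv n i k o = 0 := by
  have hne : ∀ m : Fin (n k), (⟨k, m⟩ : Elem n) ≠ i := fun m hm => h (congrArg Sigma.fst hm)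
  cases o <;> simp [probDeriv, hne]

theorem slotDiff_of_ne {s : Slot B} {i : Elem n} (h : s.1 ≠ i.1) (G : Choice n B → ℝ) :
    slotDiff n B s i G = 0 :=
  funext fun e => by simp [slotDiff, probDeriv_of_ne n h]

theorem slotDiff_self (s : Slot B) (m : Fin (n s.1)) (G : Choice n B → ℝ) (e : Choice n B) :
    slotDiff n B s ⟨s.1, m⟩ G e =
      G (Function.update e s (some m)) - G (Function.update e s none) := by
  simp only [slotDiff, probDeriv, Sigma.mk.injEq, heq_eq_eq, true_and, sum_ite_eq', mem_univ,
    ↓reduceIte, Fintype.sum_option, neg_mul, one_mul, ite_mul, zero_mul]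
  ring

theorem abs_slotDiff_le (s : Slot B) (i : Elem n) {G : Choice n B → ℝ} {M : ℝ}
    (hG : ∀ e, G e ∈ Set.Icc 0 M) (e : Choice n B) :
    |slotDiff n B s i G e| ≤ if s.1 = i.1 then M else 0 := by
  obtain ⟨k, b⟩ := s
  obtain ⟨k', m⟩ := i
  by_cases h : k = k'
  · subst h
    rw [if_pos rfl, slotDiff_self]
    exact abs_sub_le_of_nonneg_of_le (hG _).1 (hG _).2 (hG _).1 (hG _).2
  · rw [if_neg h, slotDiff_of_ne n B h]
    simp

theorem chosen_update (e : Choice n B) (s : Slot B) (o : Option (Fin (n s.1))) :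
    chosen n B (Function.update e s o) univ =
      (o.map fun m => (⟨s.1, m⟩ : Elem n)).toFinset ∪ chosen n B e (univ.erase s) := by
  rw [chosen, ← insert_erase (mem_univ s), biUnion_insert, erase_insert (notMem_erase s univ),
    Function.update_self]
  congr 1
  exact biUnion_congr rfl fun s' hs' => by rw [Function.update_of_ne (ne_of_mem_erase hs')]

end

section

variable {n : Fin K → ℕ} {f : Finset (Elem n) → ℝ} {Mf : ℝ}

theorem marg_nonneg (hmono : MonotoneSet n f) (v : Elem n) (A : Finset (Elem n)) :
    0 ≤ marg n f v A :=
  sub_nonneg.2 (hmono _ _ (subset_insert v A))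

theorem nonneg_of_isGreatest_marg (hmono : MonotoneSet n f)
    (hMf : IsGreatest {r : ℝ | ∃ (S : Finset (Elem n)) (e : Elem n), e ∉ S ∧ r = marg n f e S} Mf) :
    0 ≤ Mf := by
  obtain ⟨S, v, -, rfl⟩ := hMf.1
  exact marg_nonneg hmono v S

theorem marg_mem_Icc (hmono : MonotoneSet n f)
    (hMf : IsGreatest {r : ℝ | ∃ (S : Finset (Elem n)) (e : Elem n), e ∉ S ∧ r = marg n f e S} Mf)
    (v : Elem n) (A : Finset (Elem n)) : marg n f v A ∈ Set.Icc 0 Mf := by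
  refine ⟨marg_nonneg hmono v A, ?_⟩
  by_cases hv : v ∈ A
  · simpa [marg, insert_eq_of_mem hv] using nonneg_of_isGreatest_marg hmono hMf
  · exact hMf.2 ⟨A, v, hv, rfl⟩

theorem slotDiff_chosen_mem_Icc (B : Fin K → ℕ) (hmono : MonotoneSet n f)
    (hMf : IsGreatest {r : ℝ | ∃ (S : Finset (Elem n)) (e : Elem n), e ∉ S ∧ r = marg n f e S} Mf)
    (s : Slot B) (j : Elem n) (e : Choice n B) :
    slotDiff n B s j (fun e => f (chosen n B e univ)) e ∈
      Set.Icc 0 (if s.1 = j.1 then Mf else 0) := by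
  obtain ⟨k, b⟩ := s
  obtain ⟨k', m⟩ := j
  by_cases h : k = k'
  · subst h
    rw [if_pos rfl, slotDiff_self, chosen_update, chosen_update]
    simpa [marg] using marg_mem_Icc hmono hMf ⟨k, m⟩ (chosen n B e (univ.erase ⟨k, b⟩))
  · rw [if_neg h, slotDiff_of_ne n B h]
    simp

end

theorem sum_slot_ite (B : Fin K → ℕ) (k : Fin K) (c : ℝ) :
    ∑ s : Slot B, (if s.1 = k then c else 0) = B k * c := by
  rw [Fintype.sum_sigma, Fintype.sum_eq_single k fun k' hk' => by simp [hk']]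
  simp

theorem multinoulliExtension_pderiv2_bound_general {K : ℕ} (n B : Fin K → ℕ)
    (f : Finset (Elem n) → ℝ) (hmono : MonotoneSet n f)
    (Mf : ℝ)
    (hMf : IsGreatest
      {r : ℝ | ∃ (S : Finset (Elem n)) (e : Elem n), e ∉ S ∧ r = marg n f e S} Mf)
    (x : Elem n → ℝ) (hx : InSimplex n x)
    (k₁ k₂ : Fin K) (m₁ : Fin (n k₁)) (m₂ : Fin (n k₂)) :
    |pderiv2 n (ME n B f) ⟨k₁, m₁⟩ ⟨k₂, m₂⟩ x| ≤
      ((Finset.univ.sup B : ℕ) : ℝ) ^ 2 * Mf := by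
  have hterm : ∀ s₁ s₂ : Slot B,
      |expect n B x (slotDiff n B s₂ ⟨k₁, m₁⟩ (slotDiff n B s₁ ⟨k₂, m₂⟩
        fun e => f (chosen n B e univ)))| ≤
        if s₂.1 = k₁ then (if s₁.1 = k₂ then Mf else 0) else 0 :=
    fun s₁ s₂ => abs_expect_le n B hx
      (abs_slotDiff_le n B s₂ _ (slotDiff_chosen_mem_Icc B hmono hMf s₁ _))
  have hMf0 : 0 ≤ Mf := nonneg_of_isGreatest_marg hmono hMf
  calc |pderiv2 n (ME n B f) ⟨k₁, m₁⟩ ⟨k₂, m₂⟩ x|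
      = |∑ s₁, ∑ s₂, expect n B x (slotDiff n B s₂ ⟨k₁, m₁⟩ (slotDiff n B s₁ ⟨k₂, m₂⟩
          fun e => f (chosen n B e univ)))| := by
        rw [← pderiv2_expect]
        rfl
    _ ≤ ∑ s₁ : Slot B, ∑ s₂ : Slot B, if s₂.1 = k₁ then (if s₁.1 = k₂ then Mf else 0) else 0 :=
        (abs_sum_le_sum_abs _ _).trans <| sum_le_sum fun s₁ _ =>
          (abs_sum_le_sum_abs _ _).trans <| sum_le_sum fun s₂ _ => hterm s₁ s₂
    _ = B k₁ * (B k₂ * Mf) := by simp only [sum_slot_ite, ← mul_sum]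
    _ ≤ ((univ.sup B : ℕ) : ℝ) ^ 2 * Mf := by
        rw [sq, mul_assoc]
        gcongr
        exacts [le_sup (mem_univ k₁), le_sup (mem_univ k₂)]

theorem multinoulliExtension_pderiv2_bound {K : ℕ} (n B : Fin K → ℕ) (hn : ∀ k, 1 ≤ n k)
    (hB : ∀ k, 0 < B k) (hBn : ∀ k, B k ≤ n k)
    (f : Finset (Elem n) → ℝ) (hf0 : ∀ S, 0 ≤ f S)
    (hK : 0 < K) (hmono : MonotoneSet n f)
    (Mf : ℝ)
    (hMf : IsGreatest
      {r : ℝ | ∃ (S : Finset (Elem n)) (e : Elem n), e ∉ S ∧ r = marg n f e S} Mf)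
    (x : Elem n → ℝ) (hx : InSimplex n x)
    (k₁ k₂ : Fin K) (m₁ : Fin (n k₁)) (m₂ : Fin (n k₂)) :
    |pderiv2 n (ME n B f) ⟨k₁, m₁⟩ ⟨k₂, m₂⟩ x| ≤
      ((Finset.univ.sup B : ℕ) : ℝ) ^ 2 * Mf :=
  multinoulliExtension_pderiv2_bound_general n B f hmono Mf hMf x hx k₁ k₂ m₁ m₂

end Multinoulli
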